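/- arXiv:2310.05795 — 2 statements merged into one kernel-verified Lean document; each statement's English description precedes it below -/
import Mathlib

section
/- Let S ≤ G₁ × ⋯ × Gₙ be a full subdirect product and fix i ∈ I. Assume that: (1) for each k ∈ I∖{i}, the quotient G_i / N_{{k}}^{(i)} is virtually abelian; and (2) for each nonempty J ⊆ I∖{i} and each finite-index subgroup K of U_J(1)^{(i)}, there is a finite-index subgroup H_K of G_i such that K ≤ H_K and ⁅H_K, H_K⁆ = ⁅K, K⁆. Then G_i / L_i is virtually nilpotent. -/
/-- The kernel of the projection `p_J : S → ∏_{j ∈ J} G_j`, viewed as a subgroup of the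
direct product: the elements of `S` whose coordinates in `J` are all trivial. -/
def projKer {n : ℕ} (G : Fin n → Type*) [∀ i, Group (G i)]
    (S : Subgroup (∀ i, G i)) (J : Finset (Fin n)) : Subgroup (∀ i, G i) :=
  S ⊓ ⨅ j ∈ J, (Pi.evalMonoidHom G j).ker

/-- `N_J^{(i)} = p_i (ker p_J)`, a subgroup of `G i`. -/
def NJ {n : ℕ} (G : Fin n → Type*) [∀ i, Group (G i)]
    (S : Subgroup (∀ i, G i)) (i : Fin n) (J : Finset (Fin n)) : Subgroup (G i) :=
  (projKer G S J).map (Pi.evalMonoidHom G i)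

/-- `U_J(1)^{(i)}`: the subgroup of `G i` generated by `⋃_{l ∈ J} N_{{l}}^{(i)}`. -/
def UJ {n : ℕ} (G : Fin n → Type*) [∀ i, Group (G i)]
    (S : Subgroup (∀ i, G i)) (i : Fin n) (J : Finset (Fin n)) : Subgroup (G i) :=
  ⨆ l ∈ J, NJ G S i {l}

/-- `G ⧸ N` is virtually nilpotent: there is a finite-index subgroup `H` of `G` containing
`N` such that `H ⧸ N` is nilpotent, i.e. some term of the lower central series of `H`
is contained in `N`. -/
def QuotVirtuallyNilpotent {G : Type*} [Group G] (N : Subgroup G) : Prop :=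
  ∃ H : Subgroup G, N ≤ H ∧ H.FiniteIndex ∧
    ∃ c : ℕ, ((⊤ : Subgroup H).lowerCentralSeries c).map H.subtype ≤ N

/-- `G ⧸ N` is virtually abelian: there is a finite-index subgroup `H` of `G` containing
`N` such that `H ⧸ N` is abelian, i.e. `⁅H, H⁆ ≤ N`. -/
def QuotVirtuallyAbelian {G : Type*} [Group G] (N : Subgroup G) : Prop :=
  ∃ H : Subgroup G, N ≤ H ∧ H.FiniteIndex ∧ ⁅H, H⁆ ≤ N

/-- `L_i = S ∩ G_i`, identified with a subgroup of `G i`. -/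
def Li {n : ℕ} (G : Fin n → Type*) [∀ i, Group (G i)]
    (S : Subgroup (∀ i, G i)) (i : Fin n) : Subgroup (G i) :=
  (S ⊓ (MonoidHom.mulSingle G i).range).map (Pi.evalMonoidHom G i)

/-!
We show by induction on nonempty `J ⊆ I ∖ {i}` that `G_i ⧸ N_J` is virtually nilpotent; for
`J = I ∖ {i}` this is `G_i ⧸ L_i`. Singletons are hypothesis (1). For larger `J`, take a
finite-index `T` with `γ_c(T) ≤ N_{J ∖ {l}}` for every `l ∈ J` (indexing `γ_0(T) = T`). Since
`⁅N_A, N_B⁆ ≤ N_{A ∪ B}`, `γ_c(T)` commutes with every `N_{{l}}` modulo `N_J`, so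
`K = T ∩ U_J` has `γ_{c+1}(K) ≤ N_J`. Hypothesis (2) yields a finite-index `H ≥ K` with
`⁅H, H⁆ = ⁅K, K⁆`, and then `γ_{c+1}(H) ≤ γ_{c+1}(K)`: `K` is normal in `H` with abelian
quotient, and the three subgroups lemma together with `⁅γ_a(K), γ_b(K)⁆ ≤ γ_{a+b+1}(K)` gives
`⁅γ_j(K), H⁆ ≤ γ_{j+1}(K)`.
-/

open Subgroup
open scoped commutatorElement

namespace Subgroup

variable {G : Type*} [Group G]

theorem commutator_commutator_le_of_rotate {H₁ H₂ H₃ P : Subgroup G} [P.Normal]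
    (h1 : ⁅⁅H₂, H₃⁆, H₁⁆ ≤ P) (h2 : ⁅⁅H₃, H₁⁆, H₂⁆ ≤ P) : ⁅⁅H₁, H₂⁆, H₃⁆ ≤ P := by
  simp only [← QuotientGroup.ker_mk' P, ← map_eq_bot_iff, map_commutator] at h1 h2 ⊢
  exact commutator_commutator_eq_bot_of_rotate h1 h2

theorem commutator_iSup_le_iff {ι : Sort*} {A P : Subgroup G} [P.Normal]
    {B : ι → Subgroup G} :
    ⁅A, ⨆ j, B j⁆ ≤ P ↔ ∀ j, ⁅A, B j⁆ ≤ P := by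
  simp only [← QuotientGroup.ker_mk' P, ← map_eq_bot_iff, map_commutator, map_iSup,
    commutator_eq_bot_iff_le_centralizer, le_centralizer_iff (H := map _ A), iSup_le_iff]

theorem commutator_lowerCentralSeries_le (K : Subgroup G) [K.Normal] (a b : ℕ) :
    ⁅K.lowerCentralSeries a, K.lowerCentralSeries b⁆ ≤ K.lowerCentralSeries (a + b + 1) := by
  induction b generalizing a with
  | zero => exact le_rfl
  | succ b ih =>
    rw [lowerCentralSeries_succ, commutator_comm]
    refine commutator_commutator_le_of_rotate ?_ ?_
    · rw [commutator_comm K, ← lowerCentralSeries_succ, add_right_comm a]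
      exact ih (a + 1)
    · exact commutator_mono (ih a) le_rfl

theorem commutator_lowerCentralSeries_top_le {K : Subgroup G}
    (hK : ⁅(⊤ : Subgroup G), ⊤⁆ = ⁅K, K⁆) (j : ℕ) :
    ⁅K.lowerCentralSeries j, ⊤⁆ ≤ K.lowerCentralSeries (j + 1) := by
  have : K.Normal := Normal.of_commutator_le _ (hK.trans_le (commutator_le_self K))
  have base : ⁅K, ⊤⁆ ≤ K.lowerCentralSeries 1 := (commutator_mono le_top le_rfl).trans hK.le
  induction j with
  | zero => exact base
  | succ j ih =>
    rw [lowerCentralSeries_succ]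
    refine commutator_commutator_le_of_rotate ?_ ?_
    · rw [commutator_comm]
      exact (commutator_mono le_rfl base).trans (commutator_lowerCentralSeries_le K j 1)
    · rw [commutator_comm ⊤]
      exact commutator_mono ih le_rfl

theorem top_lowerCentralSeries_le_of_commutator_eq {K : Subgroup G}
    (hK : ⁅(⊤ : Subgroup G), ⊤⁆ = ⁅K, K⁆) (j : ℕ) :
    (⊤ : Subgroup G).lowerCentralSeries (j + 1) ≤ K.lowerCentralSeries (j + 1) := by
  induction j with
  | zero => exact hK.le
  | succ j ih =>
    exact (commutator_mono ih le_rfl).trans (commutator_lowerCentralSeries_top_le hK (j + 1))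

theorem lowerCentralSeries_le_of_commutator_eq {K H : Subgroup G} (hKH : K ≤ H)
    (h : ⁅H, H⁆ = ⁅K, K⁆) (j : ℕ) :
    H.lowerCentralSeries (j + 1) ≤ K.lowerCentralSeries (j + 1) := by
  have hK : (K.subgroupOf H).map H.subtype = K := by
    rw [subgroupOf_map_subtype, inf_eq_left.mpr hKH]
  have hcomm : ⁅(⊤ : Subgroup H), ⊤⁆ = ⁅K.subgroupOf H, K.subgroupOf H⁆ := by
    apply map_injective H.subtype_injective
    rw [← _root_.commutator_def, map_subtype_commutator, map_commutator, hK, h]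
  calc H.lowerCentralSeries (j + 1)
      = ((⊤ : Subgroup H).lowerCentralSeries (j + 1)).map H.subtype :=
        (top_subtype_lowerCentralSeries H _).symm
    _ ≤ ((K.subgroupOf H).lowerCentralSeries (j + 1)).map H.subtype :=
        map_mono (top_lowerCentralSeries_le_of_commutator_eq hcomm j)
    _ = K.lowerCentralSeries (j + 1) := by rw [map_lowerCentralSeries, hK]

end Subgroup

section VirtuallyNilpotent

variable {G : Type*} [Group G]

theorem QuotVirtuallyAbelian.quotVirtuallyNilpotent {N : Subgroup G}
    (h : QuotVirtuallyAbelian N) : QuotVirtuallyNilpotent N := by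
  obtain ⟨H, hNH, hH, hcomm⟩ := h
  exact ⟨H, hNH, hH, 1, by rwa [top_subtype_lowerCentralSeries]⟩

theorem quotVirtuallyNilpotent_iff_exists_lowerCentralSeries_le {N : Subgroup G} [N.Normal] :
    QuotVirtuallyNilpotent N ↔
      ∃ T : Subgroup G, T.FiniteIndex ∧ ∃ c, T.lowerCentralSeries c ≤ N := by
  constructor
  · rintro ⟨H, -, hH, c, hc⟩
    exact ⟨H, hH, c, by rwa [← top_subtype_lowerCentralSeries]⟩
  · rintro ⟨T, hT, c, hc⟩
    refine ⟨T ⊔ N, le_sup_right, finiteIndex_of_le le_sup_left, c, ?_⟩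
    have hN : N.map (QuotientGroup.mk' N) = ⊥ := by
      rw [Subgroup.map_eq_bot_iff, QuotientGroup.ker_mk']
    have hTN : ((T ⊔ N).lowerCentralSeries c).map (QuotientGroup.mk' N) = ⊥ := by
      rw [map_lowerCentralSeries, Subgroup.map_sup, hN, sup_bot_eq, ← map_lowerCentralSeries,
        Subgroup.map_eq_bot_iff, QuotientGroup.ker_mk']
      exact hc
    rw [top_subtype_lowerCentralSeries]
    exact ((Subgroup.map_eq_bot_iff _).mp hTN).trans_eq (QuotientGroup.ker_mk' N)

theorem exists_finiteIndex_forall_lowerCentralSeries_le {ι : Type*} (s : Finset ι)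
    {P : ι → Subgroup G}
    (h : ∀ l ∈ s, ∃ T : Subgroup G, T.FiniteIndex ∧ ∃ c, T.lowerCentralSeries c ≤ P l) :
    ∃ T : Subgroup G, T.FiniteIndex ∧ ∃ c, ∀ l ∈ s, T.lowerCentralSeries c ≤ P l := by
  classical
  induction s using Finset.induction_on with
  | empty => exact ⟨⊤, inferInstance, 0, by simp⟩
  | insert l s _ ih =>
    obtain ⟨T, hT, c, hc⟩ := h l (Finset.mem_insert_self l s)
    obtain ⟨T', hT', c', hc'⟩ := ih fun k hk => h k (Finset.mem_insert_of_mem hk)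
    have shrink {U : Subgroup G} {d : ℕ} (hU : T ⊓ T' ≤ U) (hd : d ≤ max c c') :
        (T ⊓ T').lowerCentralSeries (max c c') ≤ U.lowerCentralSeries d :=
      (Subgroup.lowerCentralSeries_antitone _ hd).trans (lowerCentralSeries_mono d hU)
    refine ⟨T ⊓ T', inferInstance, max c c', (Finset.forall_mem_insert _ _ _).mpr ⟨?_, ?_⟩⟩
    · exact (shrink inf_le_left (le_max_left c c')).trans hc
    · exact fun k hk => (shrink inf_le_right (le_max_right c c')).trans (hc' k hk)

theorem exists_finiteIndex_lowerCentralSeries_le_of_commutator_le {T U P : Subgroup G}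
    [T.FiniteIndex] {c : ℕ} (hTU : ⁅T.lowerCentralSeries c, U⁆ ≤ P)
    (hU : ∀ K : Subgroup G, K ≤ U → K.relIndex U ≠ 0 →
      ∃ H : Subgroup G, H.FiniteIndex ∧ K ≤ H ∧ ⁅H, H⁆ = ⁅K, K⁆) :
    ∃ H : Subgroup G, H.FiniteIndex ∧ ∃ m, H.lowerCentralSeries m ≤ P := by
  have hKU : (T ⊓ U).relIndex U ≠ 0 := by
    rw [inf_relIndex_right]
    exact isFiniteRelIndex_of_finiteIndex.relIndex_ne_zero
  obtain ⟨H, hH, hKH, hcomm⟩ := hU (T ⊓ U) inf_le_right hKU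
  refine ⟨H, hH, c + 1, (lowerCentralSeries_le_of_commutator_eq hKH hcomm c).trans ?_⟩
  exact (commutator_mono (lowerCentralSeries_mono c inf_le_left) inf_le_right).trans hTU

end VirtuallyNilpotent

section SubdirectProduct

variable {n : ℕ} {G : Fin n → Type*} [∀ i, Group (G i)] {S : Subgroup (∀ i, G i)}

theorem mem_projKer {J : Finset (Fin n)} {x : ∀ j, G j} :
    x ∈ projKer G S J ↔ x ∈ S ∧ ∀ j ∈ J, x j = 1 := by
  simp [projKer]

theorem NJ_normal {i : Fin n} (hsub : S.map (Pi.evalMonoidHom G i) = ⊤) (J : Finset (Fin n)) :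
    (NJ G S i J).Normal := by
  refine ⟨fun x hx g => ?_⟩
  obtain ⟨s, hs, rfl⟩ := mem_map.mp hx
  obtain ⟨t, ht, rfl⟩ := mem_map.mp (hsub ▸ mem_top g : g ∈ S.map (Pi.evalMonoidHom G i))
  rw [mem_projKer] at hs
  refine mem_map.mpr ⟨t * s * t⁻¹, mem_projKer.mpr ⟨?_, fun j hj => ?_⟩, by simp⟩
  · exact mul_mem (mul_mem ht hs.1) (inv_mem ht)
  · simp [hs.2 j hj]

theorem commutator_NJ_le (i : Fin n) (A B : Finset (Fin n)) :
    ⁅NJ G S i A, NJ G S i B⁆ ≤ NJ G S i (A ∪ B) := by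
  rw [commutator_le]
  rintro - ⟨a, ha, rfl⟩ - ⟨b, hb, rfl⟩
  simp only [SetLike.mem_coe, mem_projKer] at ha hb
  refine ⟨⁅a, b⁆, mem_projKer.mpr ⟨?_, fun j hj => ?_⟩, map_commutatorElement _ _ _⟩
  · exact commutator_le_self S (commutator_mem_commutator ha.1 hb.1)
  · rcases Finset.mem_union.mp hj with h | h
    · simp [commutatorElement_def, ha.2 j h]
    · simp [commutatorElement_def, hb.2 j h]

theorem commutator_UJ_le {i : Fin n} (hsub : S.map (Pi.evalMonoidHom G i) = ⊤)
    {J : Finset (Fin n)} {A : Subgroup (G i)} (hA : ∀ l ∈ J, A ≤ NJ G S i (J.erase l)) :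
    ⁅A, UJ G S i J⁆ ≤ NJ G S i J := by
  have := NJ_normal hsub J
  simp only [UJ, commutator_iSup_le_iff]
  intro l hl
  calc ⁅A, NJ G S i {l}⁆
      ≤ ⁅NJ G S i (J.erase l), NJ G S i {l}⁆ := commutator_mono (hA l hl) le_rfl
    _ ≤ NJ G S i (J.erase l ∪ {l}) := commutator_NJ_le i _ _
    _ = NJ G S i J := by rw [Finset.union_singleton, Finset.insert_erase hl]

theorem range_mulSingle_eq_iInf_ker (i : Fin n) :
    (MonoidHom.mulSingle G i).range =
      ⨅ j ∈ ({i}ᶜ : Finset (Fin n)), (Pi.evalMonoidHom G j).ker := by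
  ext x
  simp only [MonoidHom.mem_range, mem_iInf, Finset.mem_compl, Finset.mem_singleton,
    MonoidHom.mem_ker, Pi.evalMonoidHom_apply, MonoidHom.mulSingle_apply]
  constructor
  · rintro ⟨g, rfl⟩ j hj
    exact Pi.mulSingle_eq_of_ne hj g
  · intro h
    refine ⟨x i, funext fun j => ?_⟩
    by_cases hj : j = i
    · subst hj
      exact Pi.mulSingle_eq_same _ _
    · rw [Pi.mulSingle_eq_of_ne hj, h j hj]

theorem Li_eq_NJ_compl (i : Fin n) : Li G S i = NJ G S i {i}ᶜ := by
  rw [Li, NJ, projKer, range_mulSingle_eq_iInf_ker]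

theorem quotVirtuallyNilpotent_NJ {i : Fin n} (hsub : S.map (Pi.evalMonoidHom G i) = ⊤)
    (h1 : ∀ k : Fin n, k ≠ i → QuotVirtuallyAbelian (NJ G S i {k}))
    (h2 : ∀ J : Finset (Fin n), J.Nonempty → i ∉ J →
      ∀ K : Subgroup (G i), K ≤ UJ G S i J → K.relIndex (UJ G S i J) ≠ 0 →
        ∃ H : Subgroup (G i), H.FiniteIndex ∧ K ≤ H ∧ ⁅H, H⁆ = ⁅K, K⁆)
    {J : Finset (Fin n)} (hJ : J.Nonempty) (hiJ : i ∉ J) :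
    QuotVirtuallyNilpotent (NJ G S i J) := by
  induction hJ using Finset.Nonempty.strong_induction with
  | h₀ k => exact (h1 k (by simpa [eq_comm] using hiJ)).quotVirtuallyNilpotent
  | @h₁ J hJ ih =>
    have hJl : ∀ l ∈ J, ∃ T : Subgroup (G i), T.FiniteIndex ∧
        ∃ c, T.lowerCentralSeries c ≤ NJ G S i (J.erase l) := fun l hl =>
      have := NJ_normal hsub (J.erase l)
      quotVirtuallyNilpotent_iff_exists_lowerCentralSeries_le.mp <|
        ih _ hJ.erase_nonempty (Finset.erase_ssubset hl) fun h => hiJ (Finset.mem_of_mem_erase h)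
    obtain ⟨T, hT, c, hTc⟩ := exists_finiteIndex_forall_lowerCentralSeries_le J hJl
    have := NJ_normal hsub J
    exact quotVirtuallyNilpotent_iff_exists_lowerCentralSeries_le.mpr <|
      exists_finiteIndex_lowerCentralSeries_le_of_commutator_le (commutator_UJ_le hsub hTc)
        (h2 J hJ.nonempty hiJ)

end SubdirectProduct

theorem quotient_Li_virtuallyNilpotent_general {n : ℕ} (hn : 2 ≤ n)
    (G : Fin n → Type*) [∀ i, Group (G i)] (S : Subgroup (∀ i, G i))
    (hsubdirect : ∀ i, S.map (Pi.evalMonoidHom G i) = ⊤)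
    (i : Fin n)
    (h1 : ∀ k : Fin n, k ≠ i → QuotVirtuallyAbelian (NJ G S i {k}))
    (h2 : ∀ J : Finset (Fin n), J.Nonempty → i ∉ J →
      ∀ K : Subgroup (G i), K ≤ UJ G S i J → K.relIndex (UJ G S i J) ≠ 0 →
        ∃ H : Subgroup (G i), H.FiniteIndex ∧ K ≤ H ∧ ⁅H, H⁆ = ⁅K, K⁆) :
    QuotVirtuallyNilpotent (Li G S i) := by
  have hne : ({i}ᶜ : Finset (Fin n)).Nonempty := by
    rw [← Finset.card_pos, Finset.card_compl, Finset.card_singleton, Fintype.card_fin]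
    omega
  rw [Li_eq_NJ_compl]
  exact quotVirtuallyNilpotent_NJ (hsubdirect i) h1 h2 hne (by simp)

/-- Let `S` be a full subdirect product of `G₁ × ⋯ × Gₙ` and fix `i`.
If (1) `G_i ⧸ N_{{k}}^{(i)}` is virtually abelian for each `k ≠ i`, and (2) for each
nonempty `J ⊆ I \ {i}` and each finite-index subgroup `K ≤ U_J(1)^{(i)}` there is a
finite-index subgroup `H_K ≤ G_i` with `K ≤ H_K` and `⁅H_K, H_K⁆ = ⁅K, K⁆`, then
`G_i ⧸ L_i` is virtually nilpotent. -/
theorem quotient_Li_virtuallyNilpotent {n : ℕ} (hn : 2 ≤ n)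
    (G : Fin n → Type*) [∀ i, Group (G i)] (S : Subgroup (∀ i, G i))
    (hsubdirect : ∀ i, S.map (Pi.evalMonoidHom G i) = ⊤)
    (hfull : ∀ i, S ⊓ (MonoidHom.mulSingle G i).range ≠ ⊥)
    (i : Fin n)
    (h1 : ∀ k : Fin n, k ≠ i → QuotVirtuallyAbelian (NJ G S i {k}))
    (h2 : ∀ J : Finset (Fin n), J.Nonempty → i ∉ J →
      ∀ K : Subgroup (G i), K ≤ UJ G S i J → K.relIndex (UJ G S i J) ≠ 0 →
        ∃ H : Subgroup (G i), H.FiniteIndex ∧ K ≤ H ∧ ⁅H, H⁆ = ⁅K, K⁆) :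
    QuotVirtuallyNilpotent (Li G S i) :=
  quotient_Li_virtuallyNilpotent_general hn G S hsubdirect i h1 h2
end

section
/- Let S ≤ G₁ × ⋯ × Gₙ be a full subdirect product, let i ∈ I, and let J ⊆ I∖{i} be nonempty. For each k ∈ J, set J_k = (J∖{k}) ∪ {i}. If for each k ∈ J the quotient G_k / N_{J_k}^{(k)} is virtually nilpotent, then G_i / N_J^{(i)} is virtually nilpotent. -/
/-!
Choose finite-index `H_k ≤ G_k` (`k ∈ J`) with `γ_c(H_k) ≤ N_{J_k}^{(k)}` for a common `c`,
and let `S' = S ∩ ∏_{k ∈ J} H_k`. Then `S'` has finite index in `S`, so by subdirectness `p_i(S')`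
has finite index in `G_i`, and it contains `N_J^{(i)}`. For `t ∈ γ_c(S')` every coordinate `t_k`,
`k ∈ J`, lies in `γ_c(H_k) ≤ N_{J_k}^{(k)}`, so it is the `k`-th coordinate of some `u_k ∈ S`
that is trivial at `i` and on `J ∖ {k}`. Dividing `t` by the `u_k` makes it trivial on `J` without
changing `t_i`; hence `γ_c(p_i S') = p_i(γ_c S') ≤ N_J^{(i)}`.
-/

theorem quotVirtuallyNilpotent_iff {G : Type*} [Group G] (N : Subgroup G) :
    QuotVirtuallyNilpotent N ↔
      ∃ H : Subgroup G, N ≤ H ∧ H.FiniteIndex ∧ ∃ c : ℕ, H.lowerCentralSeries c ≤ N := by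
  simp only [QuotVirtuallyNilpotent, Subgroup.top_subtype_lowerCentralSeries]

namespace Subgroup

variable {A B : Type*} [Group A] [Group B]

theorem finiteIndex_map_inf {f : A →* B} {S : Subgroup A} (hS : S.map f = ⊤)
    (P : Subgroup A) [P.FiniteIndex] : ((S ⊓ P).map f).FiniteIndex := by
  have hsurj : Function.Surjective (f.comp S.subtype) := by
    rw [← MonoidHom.range_eq_top, MonoidHom.range_comp, range_subtype, hS]
  have hmap : (S ⊓ P).map f = (P.subgroupOf S).map (f.comp S.subtype) := by
    rw [← map_map, subgroupOf_map_subtype, inf_comm]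
  rw [hmap]
  exact ⟨ne_zero_of_dvd_ne_zero FiniteIndex.index_ne_zero (index_map_dvd _ hsurj)⟩

theorem finiteIndex_pi {ι : Type*} {G : ι → Type*} [∀ k, Group (G k)] (s : Finset ι)
    (H : ∀ k, Subgroup (G k)) (hH : ∀ k ∈ s, (H k).FiniteIndex) :
    (pi (s : Set ι) H).FiniteIndex := by
  have hpi : pi (s : Set ι) H = ⨅ k ∈ s, (H k).comap (Pi.evalMonoidHom G k) := by
    ext; simp [mem_pi]
  rw [hpi]
  refine finiteIndex_iInf' _ fun k hk => ⟨?_⟩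
  rw [index_comap_of_surjective _ (Function.surjective_eval k)]
  exact (hH k hk).index_ne_zero

theorem map_lowerCentralSeries_le {f : A →* B} {K : Subgroup A} {H : Subgroup B}
    (h : K.map f ≤ H) (c : ℕ) : (K.lowerCentralSeries c).map f ≤ H.lowerCentralSeries c := by
  rw [map_lowerCentralSeries]
  exact lowerCentralSeries_mono c h

end Subgroup

section SubdirectProduct

variable {n : ℕ} {G : Fin n → Type*} [∀ i, Group (G i)] {S : Subgroup (∀ i, G i)}

theorem mem_projKer_iff {J : Finset (Fin n)} {t : ∀ i, G i} :
    t ∈ projKer G S J ↔ t ∈ S ∧ ∀ j ∈ J, t j = 1 := by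
  simp [projKer, Subgroup.mem_inf, Subgroup.mem_iInf, MonoidHom.mem_ker]

theorem mem_NJ_of_eq_one_of_mem_NJ_insert_erase (i : Fin n) {J T : Finset (Fin n)}
    (hTJ : T ⊆ J) {t : ∀ i, G i} (htS : t ∈ S) (hone : ∀ k ∈ J, k ∉ T → t k = 1)
    (hmem : ∀ k ∈ T, t k ∈ NJ G S k (insert i (J.erase k))) : t i ∈ NJ G S i J := by
  induction T using Finset.induction_on generalizing t with
  | empty => exact ⟨t, mem_projKer_iff.mpr ⟨htS, fun k hk => hone k hk (by simp)⟩, rfl⟩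
  | @insert a T haT ih =>
    obtain ⟨u, hu, hua⟩ := hmem a (Finset.mem_insert_self a T)
    obtain ⟨huS, hu1⟩ := mem_projKer_iff.mp hu
    have hui : u i = 1 := hu1 i (Finset.mem_insert_self i _)
    have huk : ∀ k ∈ J, k ≠ a → u k = 1 := fun k hk hka =>
      hu1 k (Finset.mem_insert_of_mem (Finset.mem_erase.mpr ⟨hka, hk⟩))
    have hua' : u a = t a := hua
    have hone' : ∀ k ∈ J, k ∉ T → (t * u⁻¹) k = 1 := fun k hk hkT => by
      by_cases hka : k = a
      · subst hka; simp [hua']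
      · simp [huk k hk hka, hone k hk (by simp [hka, hkT])]
    have hmem' : ∀ k ∈ T, (t * u⁻¹) k ∈ NJ G S k (insert i (J.erase k)) := fun k hkT => by
      have hka : k ≠ a := ne_of_mem_of_not_mem hkT haT
      simpa [huk k (hTJ (Finset.mem_insert_of_mem hkT)) hka] using
        hmem k (Finset.mem_insert_of_mem hkT)
    simpa [hui] using
      ih (Finset.insert_subset_iff.mp hTJ).2 (mul_mem htS (inv_mem huS)) hone' hmem'

theorem mem_NJ_of_mem_NJ_insert_erase (i : Fin n) {J : Finset (Fin n)} {t : ∀ i, G i}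
    (htS : t ∈ S) (hmem : ∀ k ∈ J, t k ∈ NJ G S k (insert i (J.erase k))) :
    t i ∈ NJ G S i J :=
  mem_NJ_of_eq_one_of_mem_NJ_insert_erase i subset_rfl htS (fun _ hk hk' => absurd hk hk') hmem

theorem NJ_le_map_inf_pi (i : Fin n) (J : Finset (Fin n)) (H : ∀ k, Subgroup (G k)) :
    NJ G S i J ≤ (S ⊓ Subgroup.pi (J : Set (Fin n)) H).map (Pi.evalMonoidHom G i) := by
  rintro _ ⟨t, ht, rfl⟩
  obtain ⟨htS, ht1⟩ := mem_projKer_iff.mp ht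
  exact ⟨t, ⟨htS, fun k hk => by simp [ht1 k hk]⟩, rfl⟩

theorem quotVirtuallyNilpotent_NJ_of_lowerCentralSeries_le
    (hsubdirect : ∀ i, S.map (Pi.evalMonoidHom G i) = ⊤) (i : Fin n) (J : Finset (Fin n))
    (H : ∀ k, Subgroup (G k)) (hH : ∀ k ∈ J, (H k).FiniteIndex) (c : ℕ)
    (hc : ∀ k ∈ J, (H k).lowerCentralSeries c ≤ NJ G S k (insert i (J.erase k))) :
    QuotVirtuallyNilpotent (NJ G S i J) := by
  set S' := S ⊓ Subgroup.pi (J : Set (Fin n)) H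
  have := Subgroup.finiteIndex_pi J H hH
  refine (quotVirtuallyNilpotent_iff _).mpr ⟨S'.map (Pi.evalMonoidHom G i),
    NJ_le_map_inf_pi i J H, Subgroup.finiteIndex_map_inf (hsubdirect i) _, c, ?_⟩
  rw [← Subgroup.map_lowerCentralSeries]
  rintro _ ⟨t, ht, rfl⟩
  refine mem_NJ_of_mem_NJ_insert_erase i (S'.lowerCentralSeries_le_self c ht).1 fun k hk => ?_
  have hS'k : S'.map (Pi.evalMonoidHom G k) ≤ H k := by
    rintro _ ⟨s, hs, rfl⟩
    exact hs.2 k hk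
  exact hc k hk (Subgroup.map_lowerCentralSeries_le hS'k c ⟨t, ht, rfl⟩)

end SubdirectProduct

theorem quotient_NJ_virtuallyNilpotent_of_factors_general {n : ℕ}
    (G : Fin n → Type*) [∀ i, Group (G i)] (S : Subgroup (∀ i, G i))
    (hsubdirect : ∀ i, S.map (Pi.evalMonoidHom G i) = ⊤)
    (i : Fin n) (J : Finset (Fin n))
    (h : ∀ k ∈ J, QuotVirtuallyNilpotent (NJ G S k (insert i (J.erase k)))) :
    QuotVirtuallyNilpotent (NJ G S i J) := by
  have hfamily : ∀ k, ∃ H : Subgroup (G k), ∃ c : ℕ, k ∈ J →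
      H.FiniteIndex ∧ H.lowerCentralSeries c ≤ NJ G S k (insert i (J.erase k)) := by
    intro k
    by_cases hk : k ∈ J
    · obtain ⟨H, -, hH, c, hc⟩ := (quotVirtuallyNilpotent_iff _).mp (h k hk)
      exact ⟨H, c, fun _ => ⟨hH, hc⟩⟩
    · exact ⟨⊤, 0, fun hk' => absurd hk' hk⟩
  choose H c hH using hfamily
  refine quotVirtuallyNilpotent_NJ_of_lowerCentralSeries_le hsubdirect i J H
    (fun k hk => (hH k hk).1) (J.sup c) fun k hk => le_trans ?_ (hH k hk).2
  exact (H k).lowerCentralSeries_antitone (Finset.le_sup hk)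

/-- Let `S` be a full subdirect product of `G₁ × ⋯ × Gₙ`, `i ∈ I`, and
`J ⊆ I \ {i}` nonempty. For `k ∈ J` set `J_k = (J \ {k}) ∪ {i}`. If `G_k ⧸ N_{J_k}^{(k)}`
is virtually nilpotent for each `k ∈ J`, then `G_i ⧸ N_J^{(i)}` is virtually nilpotent. -/
theorem quotient_NJ_virtuallyNilpotent_of_factors {n : ℕ} (hn : 2 ≤ n)
    (G : Fin n → Type*) [∀ i, Group (G i)] (S : Subgroup (∀ i, G i))
    (hsubdirect : ∀ i, S.map (Pi.evalMonoidHom G i) = ⊤)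
    (hfull : ∀ i, S ⊓ (MonoidHom.mulSingle G i).range ≠ ⊥)
    (i : Fin n) (J : Finset (Fin n)) (hJ : J.Nonempty) (hiJ : i ∉ J)
    (h : ∀ k ∈ J, QuotVirtuallyNilpotent (NJ G S k (insert i (J.erase k)))) :
    QuotVirtuallyNilpotent (NJ G S i J) :=
  quotient_NJ_virtuallyNilpotent_of_factors_general G S hsubdirect i J h
end
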